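/- Let G be a finite bipartite weighted graph with parts A, B, initial vertex s ∈ A and marked vertex t ∈ B, with total weight W = Σ_{e∈E} w_e, and let p be a unit flow from s to t with energy R = Σ_{e∈E} p_e²/w_e. Then there exists a vector v in the span of {|e⟩ : e ∈ E} such that U(|ss'⟩ + v) = |t't⟩ + v, where U = R_B R_A is one step of the quantum walk on the extended graph G', and ‖v‖² ≤ (W + R)/2. In particular, U transduces |ss'⟩ into |t't⟩ with transduction complexity at most (W + R_{s,t})/2, where R_{s,t} is the minimum energy over all unit flows from s to t (the effective resistance). -/

import Mathlib

/-!
**Statement 6.**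
Let `G` be a finite bipartite weighted graph with parts `A, B`, initial vertex `s ∈ A` and
marked vertex `t ∈ B`, total weight `W = ∑_{e ∈ E} w e`, and let `p` be a unit flow from `s`
to `t` with energy `R = ∑_{e ∈ E} (p e)² / w e`.  Then there exists a vector `v` in the span
of the original edge states `{|e⟩ : e ∈ E}` such that `U (|ss'⟩ + v) = |t't⟩ + v`, where
`U = R_B R_A` is one step of the quantum walk on the extended graph `G'`, and
`‖v‖² ≤ (W + R) / 2`.  (In particular, `U` transduces `|ss'⟩` into `|t't⟩` with transduction
complexity at most `(W + R_{s,t}) / 2`, `R_{s,t}` being the minimal energy, i.e. the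
effective resistance.)

The walk space is `EuclideanSpace ℂ (E ⊕ Bool)` (`Sum.inr false = ss'`, `Sum.inr true = t't`).
`R_A` is the unitary acting as `−1` on the span of the star states `{ψ_u : u ∈ A}` and as the
identity on its orthogonal complement, specified by its defining properties (similarly `R_B`).
-/

noncomputable section

namespace Stmt6

variable {V E : Type*} [Fintype V] [Fintype E] [DecidableEq V] [DecidableEq E]

def ket (x : E ⊕ Bool) : EuclideanSpace ℂ (E ⊕ Bool) := EuclideanSpace.single x 1

def psiA (endA : E → V) (w : E → ℝ) (s : V) (u : V) : EuclideanSpace ℂ (E ⊕ Bool) :=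
  (∑ e ∈ Finset.univ.filter (fun e => endA e = u),
      ((Real.sqrt (w e) : ℂ) • ket (Sum.inl e))) +
    (if u = s then ket (Sum.inr false) else 0)

def psiB (endB : E → V) (w : E → ℝ) (t : V) (u : V) : EuclideanSpace ℂ (E ⊕ Bool) :=
  (∑ e ∈ Finset.univ.filter (fun e => endB e = u),
      ((Real.sqrt (w e) : ℂ) • ket (Sum.inl e))) +
    (if u = t then ket (Sum.inr true) else 0)


set_option linter.unusedSectionVars false

/-!
Let `σ = ∑ₑ √wₑ |e⟩` and let `φ = ∑ₑ (pₑ / √wₑ) |e⟩` be the flow state, and take `v = (σ - φ) / 2`.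
Every edge has exactly one endpoint in `A`, so `∑_{u ∈ A} ψ_u = σ + |ss'⟩`, and flow conservation
says exactly that `|ss'⟩ - φ` is orthogonal to every `ψ_u`, `u ∈ A`. Hence `R_A` maps
`|ss'⟩ + v = ½ (|ss'⟩ - φ) + ½ ∑_{u ∈ A} ψ_u` to `-(σ + φ) / 2 = ½ (|t't⟩ - φ) - ½ ∑_{u ∈ B} ψ_u`,
which `R_B` maps to `|t't⟩ + v` by the same argument on the `B` side. Finally
`‖v‖² = ¼ ∑ₑ (√wₑ - pₑ / √wₑ)² ≤ ½ ∑ₑ (wₑ + pₑ² / wₑ)`.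
-/

theorem _root_.LinearMap.map_smul_add_smul_sum_of_forall_inner_eq_zero {𝕜 H ι : Type*} [RCLike 𝕜]
    [NormedAddCommGroup H] [InnerProductSpace 𝕜 H] (R : H →ₗ[𝕜] H) (S : Finset ι) (ψ : ι → H)
    (hneg : ∀ u ∈ S, R (ψ u) = -ψ u)
    (hid : ∀ x, (∀ u ∈ S, inner 𝕜 (ψ u) x = 0) → R x = x)
    {z : H} (hz : ∀ u ∈ S, inner 𝕜 (ψ u) z = 0) (a b : 𝕜) :
    R (b • z + a • ∑ u ∈ S, ψ u) = b • z - a • ∑ u ∈ S, ψ u := by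
  rw [map_add, map_smul, map_smul, map_sum, hid z hz, Finset.sum_congr rfl hneg,
    Finset.sum_neg_distrib, smul_neg, sub_eq_add_neg]

lemma inner_ket_left (i : E ⊕ Bool) (x : EuclideanSpace ℂ (E ⊕ Bool)) :
    inner ℂ (ket i) x = x i := by
  simp [ket, EuclideanSpace.inner_single_left]

lemma ket_apply (i j : E ⊕ Bool) : ket i j = if j = i then 1 else 0 := by
  simp [ket]

def edgeState (a : E → ℝ) : EuclideanSpace ℂ (E ⊕ Bool) :=
  ∑ e, (a e : ℂ) • ket (Sum.inl e)

lemma edgeState_apply_inl (a : E → ℝ) (e : E) : edgeState a (Sum.inl e) = a e := by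
  simp [edgeState, ket_apply]

lemma edgeState_apply_inr (a : E → ℝ) (b : Bool) : edgeState a (Sum.inr b) = 0 := by
  simp [edgeState, ket_apply]

lemma edgeState_mem_span (a : E → ℝ) :
    edgeState a ∈ Submodule.span ℂ (Set.range fun e : E => ket (Sum.inl e)) :=
  Submodule.sum_mem _ fun e _ => Submodule.smul_mem _ _ (Submodule.subset_span ⟨e, rfl⟩)

lemma norm_edgeState_sq (a : E → ℝ) : ‖edgeState a‖ ^ 2 = ∑ e, a e ^ 2 := by
  rw [EuclideanSpace.norm_sq_eq, Fintype.sum_sum_type]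
  simp [edgeState_apply_inl, edgeState_apply_inr]

lemma smul_sub_edgeState (c : ℝ) (a b : E → ℝ) :
    (c : ℂ) • (edgeState a - edgeState b) = edgeState (fun e => c * (a e - b e)) := by
  simp only [edgeState, ← Finset.sum_sub_distrib, Finset.smul_sum, ← sub_smul, smul_smul]
  push_cast
  rfl

/-- `psiA endA w s` is `starState endA w s false` and `psiB endB w t` is
`starState endB w t true`, both by definition. -/
def starState (endpt : E → V) (w : E → ℝ) (x : V) (d : Bool) (u : V) :
    EuclideanSpace ℂ (E ⊕ Bool) :=
  (∑ e ∈ Finset.univ.filter (fun e => endpt e = u), (Real.sqrt (w e) : ℂ) • ket (Sum.inl e)) +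
    if u = x then ket (Sum.inr d) else 0

lemma sum_starState {endpt : E → V} {S : Finset V} {x : V} (hend : ∀ e, endpt e ∈ S)
    (hx : x ∈ S) (w : E → ℝ) (d : Bool) :
    ∑ u ∈ S, starState endpt w x d u =
      edgeState (fun e => Real.sqrt (w e)) + ket (Sum.inr d) := by
  simp only [starState, Finset.sum_add_distrib]
  rw [Finset.sum_fiberwise_of_maps_to (fun e _ => hend e), Finset.sum_ite_eq' S x, if_pos hx]
  rfl

lemma inner_starState (endpt : E → V) (w : E → ℝ) (x : V) (d : Bool) (u : V)
    (z : EuclideanSpace ℂ (E ⊕ Bool)) :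
    inner ℂ (starState endpt w x d u) z =
      (∑ e ∈ Finset.univ.filter (fun e => endpt e = u), (Real.sqrt (w e) : ℂ) * z (Sum.inl e)) +
        if u = x then z (Sum.inr d) else 0 := by
  simp only [starState, inner_add_left, sum_inner, inner_smul_left, inner_ket_left,
    Complex.conj_ofReal, apply_ite (fun y => inner ℂ y z), inner_zero_left]

lemma inner_starState_ket_sub_edgeState_eq_zero {w : E → ℝ} (hw : ∀ e, 0 < w e)
    {endpt : E → V} {x u : V} {p : E → ℝ}
    (hp : ∑ e ∈ Finset.univ.filter (fun e => endpt e = u), p e = if u = x then 1 else 0)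
    (d : Bool) :
    inner ℂ (starState endpt w x d u)
      (ket (Sum.inr d) - edgeState (fun e => p e / Real.sqrt (w e))) = 0 := by
  have hsqrt (e : E) : (Real.sqrt (w e) : ℂ) ≠ 0 := by
    exact_mod_cast (Real.sqrt_pos.2 (hw e)).ne'
  rw [inner_starState]
  have hflow : ∑ e ∈ Finset.univ.filter (fun e => endpt e = u), (p e : ℂ) =
      if u = x then 1 else 0 := by
    rw [← Complex.ofReal_sum, hp]; split_ifs <;> simp
  have hcancel (e : E) : (Real.sqrt (w e) : ℂ) * (p e / Real.sqrt (w e) : ℝ) = p e := by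
    push_cast; field_simp [hsqrt e]
  simp only [PiLp.sub_apply, ket_apply, edgeState_apply_inl, edgeState_apply_inr, reduceCtorEq,
    if_false, if_true, zero_sub, sub_zero, mul_neg, hcancel, Finset.sum_neg_distrib, hflow]
  split_ifs <;> simp

lemma sq_half_sqrt_sub_div_sqrt_le {w : ℝ} (hw : 0 < w) (p : ℝ) :
    (1 / 2 * (Real.sqrt w - p / Real.sqrt w)) ^ 2 ≤ (w + p ^ 2 / w) / 2 := by
  have hsq : Real.sqrt w ^ 2 = w := Real.sq_sqrt hw.le
  have hdiv : (p / Real.sqrt w) ^ 2 = p ^ 2 / w := by rw [div_pow, hsq]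
  rw [← hdiv]
  nlinarith [sq_nonneg (Real.sqrt w + p / Real.sqrt w)]

theorem electric_walk_transduction
    (A B : Finset V)
    (endA endB : E → V) (hA : ∀ e, endA e ∈ A) (hB : ∀ e, endB e ∈ B)
    (w : E → ℝ) (hw : ∀ e, 0 < w e)
    (s t : V) (hs : s ∈ A) (ht : t ∈ B)
    (p : E → ℝ)
    (hpA : ∀ u ∈ A, ∑ e ∈ Finset.univ.filter (fun e => endA e = u), p e
        = if u = s then 1 else 0)
    (hpB : ∀ u ∈ B, ∑ e ∈ Finset.univ.filter (fun e => endB e = u), p e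
        = if u = t then 1 else 0)
    (RA RB : EuclideanSpace ℂ (E ⊕ Bool) →ₗ[ℂ] EuclideanSpace ℂ (E ⊕ Bool))
    (hRAneg : ∀ u ∈ A, RA (psiA endA w s u) = -psiA endA w s u)
    (hRAid : ∀ x, (∀ u ∈ A, (inner ℂ (psiA endA w s u) x : ℂ) = 0) → RA x = x)
    (hRBneg : ∀ u ∈ B, RB (psiB endB w t u) = -psiB endB w t u)
    (hRBid : ∀ x, (∀ u ∈ B, (inner ℂ (psiB endB w t u) x : ℂ) = 0) → RB x = x) :
    ∃ v ∈ Submodule.span ℂ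
        (Set.range (fun e : E => ket (Sum.inl e) : E → EuclideanSpace ℂ (E ⊕ Bool))),
      RB (RA (ket (Sum.inr false) + v)) = ket (Sum.inr true) + v ∧
      ‖v‖ ^ 2 ≤ ((∑ e : E, w e) + ∑ e : E, (p e) ^ 2 / w e) / 2 := by
  set weights := edgeState fun e => Real.sqrt (w e)
  set flow := edgeState fun e => p e / Real.sqrt (w e)
  have hv : ((1 / 2 : ℝ) : ℂ) • (weights - flow) =
      edgeState fun e => 1 / 2 * (Real.sqrt (w e) - p e / Real.sqrt (w e)) :=
    smul_sub_edgeState _ _ _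
  refine ⟨((1 / 2 : ℝ) : ℂ) • (weights - flow), hv ▸ edgeState_mem_span _, ?_, ?_⟩
  · have hsumA : ∑ u ∈ A, psiA endA w s u = weights + ket (Sum.inr false) :=
      sum_starState hA hs w false
    have hsumB : ∑ u ∈ B, psiB endB w t u = weights + ket (Sum.inr true) :=
      sum_starState hB ht w true
    have hRA := RA.map_smul_add_smul_sum_of_forall_inner_eq_zero A (psiA endA w s) hRAneg hRAid
      (fun u hu => inner_starState_ket_sub_edgeState_eq_zero hw (hpA u hu) false)
      (1 / 2) (1 / 2)
    have hRB := RB.map_smul_add_smul_sum_of_forall_inner_eq_zero B (psiB endB w t) hRBneg hRBid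
      (fun u hu => inner_starState_ket_sub_edgeState_eq_zero hw (hpB u hu) true)
      (-1 / 2) (1 / 2)
    rw [hsumA] at hRA
    rw [hsumB] at hRB
    calc RB (RA (ket (Sum.inr false) + ((1 / 2 : ℝ) : ℂ) • (weights - flow)))
        = RB (RA ((1 / 2 : ℂ) • (ket (Sum.inr false) - flow) +
            (1 / 2 : ℂ) • (weights + ket (Sum.inr false)))) := by push_cast; congr 2; module
      _ = RB ((1 / 2 : ℂ) • (ket (Sum.inr true) - flow) +
            (-1 / 2 : ℂ) • (weights + ket (Sum.inr true))) := by rw [hRA]; congr 1; module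
      _ = ket (Sum.inr true) + ((1 / 2 : ℝ) : ℂ) • (weights - flow) := by
            rw [hRB]; push_cast; module
  · rw [hv, norm_edgeState_sq, ← Finset.sum_add_distrib, Finset.sum_div]
    exact Finset.sum_le_sum fun e _ => sq_half_sqrt_sub_div_sqrt_le (hw e) (p e)

end Stmt6
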